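/- arXiv:1905.02063 — 8 statements merged into one kernel-verified Lean document; each statement's English description precedes it below -/
import Mathlib

section
/- (Artin–Whaples weak approximation theorem) Let K be a field equipped with nontrivial, pairwise inequivalent absolute values |·|₁, |·|₂, …, |·|ₙ. Then for all x₁, …, xₙ ∈ K and every ε > 0, there exists x ∈ K such that |x − xᵢ|ᵢ < ε for every i ∈ {1, …, n}. -/
/-!
Equivalent real absolute values are positive powers of one another
(`AbsoluteValue.isEquiv_iff_exists_rpow_eq`), so they have the same balls and hence the same
topology. Absolute values inducing distinct topologies are therefore inequivalent, and for
nontrivial, pairwise inequivalent absolute values the diagonal embedding of `K` into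
`∏ᵢ (K, |·|ᵢ)` has dense range; density for the sup metric is simultaneous approximation.
-/

/-- The topology on a field `K` induced by an absolute value `f : K → ℝ`,
namely the topology of the metric `d(x,y) = f (x - y)`, generated by the open balls. -/
def absTopology {K : Type*} [Field K] (f : AbsoluteValue K ℝ) : TopologicalSpace K :=
  TopologicalSpace.generateFrom
    {s : Set K | ∃ (a : K) (r : ℝ), 0 < r ∧ s = {x : K | f (x - a) < r}}

namespace AbsoluteValue

variable {K : Type*} [Field K]

theorem IsEquiv.absTopology_le {v w : AbsoluteValue K ℝ} (h : v.IsEquiv w) :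
    absTopology w ≤ absTopology v := by
  obtain ⟨c, hc, hvw⟩ := isEquiv_iff_exists_rpow_eq.1 h
  refine TopologicalSpace.generateFrom_anti ?_
  rintro s ⟨a, r, hr, rfl⟩
  refine ⟨a, r ^ c, Real.rpow_pos_of_pos hr c, ?_⟩
  ext x
  simp [← hvw, Real.rpow_lt_rpow_iff (v.nonneg _) hr.le hc]

theorem IsEquiv.absTopology_eq {v w : AbsoluteValue K ℝ} (h : v.IsEquiv w) :
    absTopology v = absTopology w :=
  le_antisymm h.symm.absTopology_le h.absTopology_le

theorem exists_sub_lt_of_denseRange_algebraMap_pi {ι : Type*} [Fintype ι]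
    {v : ι → AbsoluteValue K ℝ} (hd : DenseRange (algebraMap K ((i : ι) → WithAbs (v i))))
    (x : ι → K) {ε : ℝ} (hε : 0 < ε) : ∃ y : K, ∀ i, v i (y - x i) < ε := by
  obtain ⟨y, hy⟩ := Metric.denseRange_iff.1 hd (fun i ↦ WithAbs.toAbs (v i) (x i)) ε hε
  refine ⟨y, fun i ↦ ?_⟩
  have hyi := (dist_pi_lt_iff hε).1 hy i
  rwa [dist_comm, dist_eq_norm] at hyi

end AbsoluteValue

/-- Artin–Whaples weak approximation: given finitely many nontrivial, pairwise
inequivalent absolute values `|·|ᵢ` on a field `K`, any tuple `(xᵢ)` can be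
simultaneously approximated: for every `ε > 0` there is `x ∈ K` with
`|x - xᵢ|ᵢ < ε` for all `i`. -/
theorem weak_approximation {K : Type*} [Field K] (n : ℕ)
    (f : Fin n → AbsoluteValue K ℝ)
    (hnontriv : ∀ i, ∃ x : K, x ≠ 0 ∧ f i x ≠ 1)
    (hineq : ∀ i j, i ≠ j → absTopology (f i) ≠ absTopology (f j)) :
    ∀ (x : Fin n → K) (ε : ℝ), 0 < ε → ∃ y : K, ∀ i, f i (y - x i) < ε := by
  intro x ε hε
  have hinequiv : Pairwise fun i j ↦ ¬(f i).IsEquiv (f j) :=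
    fun i j hij hequiv ↦ hineq i j hij hequiv.absTopology_eq
  exact AbsoluteValue.exists_sub_lt_of_denseRange_algebraMap_pi
    (AbsoluteValue.denseRange_algebraMap_pi hnontriv hinequiv) x hε
end

section
/- (First theorem of Ostrowski) Let |·| be an absolute value on ℚ that is not ultrametric. Then there exists a real number ρ with 0 < ρ ≤ 1 such that |x| = |x|_∞^ρ for all x ∈ ℚ, where |·|_∞ is the usual (archimedean) absolute value on ℚ. -/
/-!
Ostrowski's classification says that a nontrivial absolute value on `ℚ` is equivalent either to
the usual one or to a `p`-adic one. Being ultrametric only depends on the equivalence class, and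
trivial and `p`-adic absolute values are ultrametric, so `f` is equivalent to `|·|_∞`, i.e.
`f = |·|_∞ ^ ρ` for some `ρ > 0`; finally `2 ^ ρ = f 2 ≤ f 1 + f 1 = 2` gives `ρ ≤ 1`.
-/

open Real

namespace AbsoluteValue

variable {R S : Type*} [Semiring R] [Semiring S] [LinearOrder S]

theorem IsEquiv.isNonarchimedean_iff {v w : AbsoluteValue R S} (h : v.IsEquiv w) :
    IsNonarchimedean v ↔ IsNonarchimedean w := by
  simp only [IsNonarchimedean, le_sup_iff, h.le_iff_le]

theorem isNonarchimedean_of_not_isNontrivial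
    {v : AbsoluteValue R S} (hv : ¬ v.IsNontrivial) : IsNonarchimedean v := by
  intro a b
  by_cases hab : a + b = 0
  · rw [hab, map_zero]
    exact le_sup_of_le_left (v.nonneg a)
  rw [not_isNontrivial_apply hv hab]
  obtain ha | hb : a ≠ 0 ∨ b ≠ 0 := by
    by_contra! h
    simp [h] at hab
  · exact (not_isNontrivial_apply hv ha).ge.trans le_sup_left
  · exact (not_isNontrivial_apply hv hb).ge.trans le_sup_right

end AbsoluteValue

namespace Rat.AbsoluteValue

theorem isNonarchimedean_padic (p : ℕ) [Fact p.Prime] : IsNonarchimedean (padic p) := by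
  intro x y
  simp only [padic_eq_padicNorm]
  exact_mod_cast padicNorm.nonarchimedean

theorem isEquiv_real_of_not_isNonarchimedean {f : AbsoluteValue ℚ ℝ}
    (hf : ¬ IsNonarchimedean f) : f.IsEquiv real := by
  have hnt : f.IsNontrivial := by
    contrapose! hf
    exact AbsoluteValue.isNonarchimedean_of_not_isNontrivial hf
  obtain hreal | ⟨p, ⟨_, hpadic⟩, -⟩ := equiv_real_or_padic f hnt
  · exact hreal
  · exact absurd (hpadic.isNonarchimedean_iff.mpr (isNonarchimedean_padic p)) hf

theorem exists_eq_abs_rpow_of_isEquiv_real {f : AbsoluteValue ℚ ℝ} (hf : f.IsEquiv real) :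
    ∃ ρ : ℝ, 0 < ρ ∧ ρ ≤ 1 ∧ ∀ x : ℚ, f x = |(x : ℝ)| ^ ρ := by
  obtain ⟨c, hc, hfc⟩ := AbsoluteValue.isEquiv_iff_exists_rpow_eq.mp hf
  have hf_eq : ∀ x : ℚ, f x = |(x : ℝ)| ^ c⁻¹ := fun x => by
    rw [← Rat.cast_abs, ← real_eq_abs, ← hfc, rpow_rpow_inv (f.nonneg x) hc.ne']
  refine ⟨c⁻¹, inv_pos.mpr hc, ?_, hf_eq⟩
  have h2 : (2 : ℝ) ^ c⁻¹ ≤ 2 ^ (1 : ℝ) := by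
    simpa [hf_eq 2] using f.apply_nat_le_self 2
  exact (rpow_le_rpow_left_iff one_lt_two).mp h2

end Rat.AbsoluteValue

/-- First theorem of Ostrowski: a non-ultrametric absolute value on `ℚ` is a power
`|·|_∞ ^ ρ` of the usual archimedean absolute value, for some `0 < ρ ≤ 1`. -/
theorem ostrowski_archimedean (f : AbsoluteValue ℚ ℝ)
    (h : ¬ ∀ x y : ℚ, f (x + y) ≤ max (f x) (f y)) :
    ∃ ρ : ℝ, 0 < ρ ∧ ρ ≤ 1 ∧ ∀ x : ℚ, f x = |(x : ℝ)| ^ ρ :=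
  Rat.AbsoluteValue.exists_eq_abs_rpow_of_isEquiv_real
    (Rat.AbsoluteValue.isEquiv_real_of_not_isNonarchimedean h)
end

section
/- Let K be a field and f : K → ℝ≥0 a function satisfying: f(x) = 0 if and only if x = 0; f(xy) = f(x)·f(y) for all x, y; and there exists A > 0 such that f(x + y) ≤ A · max(f(x), f(y)) for all x, y. If moreover there exists C > 0 such that f(n · 1_K) ≤ C·n for every integer n > 0, then f satisfies the triangle inequality f(x + y) ≤ f(x) + f(y) for all x, y ∈ K, i.e. f is an absolute value on K. -/
open NNReal Filter Finset

/-! Artin's trick. Splitting a sum of `n ≤ 2 ^ k` terms into two halves and iterating the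
quasi-triangle inequality bounds `f` of the sum by `A ^ k` times the sum of the values of `f`;
choosing `2 ^ k ≤ 2 n` makes `A ^ k` polynomial in `n`. Applied to the binomial expansion of
`(x + y) ^ n`, with `f (n.choose i) ≤ C * n.choose i`, this gives
`f (x + y) ^ n ≤ c * n ^ p * (f x + f y) ^ n` for all `n > 0`, and polynomial factors
disappear on taking `n`-th roots. -/

lemma apply_sum_range_le_pow_mul_sum {M : Type*} [AddCommMonoid M] {f : M → ℝ≥0} {B : ℝ≥0}
    (hf0 : f 0 = 0) (hB : ∀ x y, f (x + y) ≤ B * max (f x) (f y)) (g : ℕ → M) :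
    ∀ {k n : ℕ}, n ≤ 2 ^ k → f (∑ i ∈ range n, g i) ≤ B ^ k * ∑ i ∈ range n, f (g i)
  | 0, n, hn => by
    interval_cases n
    · simp [hf0]
    · simp
  | k + 1, n, hn => by
    obtain ⟨m, r, rfl, hm, hr⟩ : ∃ m r, n = m + r ∧ m ≤ 2 ^ k ∧ r ≤ 2 ^ k :=
      ⟨min n (2 ^ k), n - min n (2 ^ k), by omega, min_le_right _ _, by rw [pow_succ] at hn; omega⟩
    rw [sum_range_add, sum_range_add]
    calc f (∑ i ∈ range m, g i + ∑ i ∈ range r, g (m + i))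
        ≤ B * max (f (∑ i ∈ range m, g i)) (f (∑ i ∈ range r, g (m + i))) := hB _ _
      _ ≤ B * max (B ^ k * ∑ i ∈ range m, f (g i)) (B ^ k * ∑ i ∈ range r, f (g (m + i))) := by
        gcongr
        exacts [apply_sum_range_le_pow_mul_sum hf0 hB g hm,
          apply_sum_range_le_pow_mul_sum hf0 hB (fun i => g (m + i)) hr]
      _ ≤ B * (B ^ k * ∑ i ∈ range m, f (g i) + B ^ k * ∑ i ∈ range r, f (g (m + i))) := by
        gcongr
        exact max_le_add_of_nonneg zero_le zero_le
      _ = B ^ (k + 1) * (∑ i ∈ range m, f (g i) + ∑ i ∈ range r, f (g (m + i))) := by ring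

lemma map_one_of_map_mul {M : Type*} [MulOneClass M] {f : M → ℝ≥0}
    (hmul : ∀ x y, f (x * y) = f x * f y) (h1 : f 1 ≠ 0) : f 1 = 1 :=
  (mul_eq_left₀ h1).mp (by rw [← hmul, one_mul])

lemma map_pow_of_map_mul {M : Type*} [Monoid M] {f : M → ℝ≥0}
    (hmul : ∀ x y, f (x * y) = f x * f y) (hf1 : f 1 = 1) (x : M) (n : ℕ) :
    f (x ^ n) = f x ^ n := by
  induction n with
  | zero => simpa using hf1
  | succ n ih => rw [pow_succ, hmul, ih, pow_succ]

lemma apply_add_pow_le {R : Type*} [CommSemiring R] {f : R → ℝ≥0} {B C : ℝ≥0}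
    (hf0 : f 0 = 0) (hf1 : f 1 = 1) (hmul : ∀ x y, f (x * y) = f x * f y)
    (hB : ∀ x y, f (x + y) ≤ B * max (f x) (f y)) (hC : ∀ n : ℕ, 0 < n → f n ≤ C * n)
    (x y : R) {k n : ℕ} (hn : n < 2 ^ k) :
    f (x + y) ^ n ≤ B ^ k * C * (f x + f y) ^ n := by
  have hpow := map_pow_of_map_mul hmul hf1
  calc f (x + y) ^ n
      = f (∑ i ∈ range (n + 1), x ^ i * y ^ (n - i) * (n.choose i : R)) := by
        rw [← hpow, add_pow]
    _ ≤ B ^ k * ∑ i ∈ range (n + 1), f (x ^ i * y ^ (n - i) * (n.choose i : R)) :=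
        apply_sum_range_le_pow_mul_sum hf0 hB _ hn
    _ ≤ B ^ k * ∑ i ∈ range (n + 1), C * (f x ^ i * f y ^ (n - i) * n.choose i) := by
        gcongr with i hi
        rw [hmul, hmul, hpow, hpow, mul_left_comm]
        gcongr
        exact hC _ (Nat.choose_pos (Nat.lt_succ_iff.mp (mem_range.mp hi)))
    _ = B ^ k * C * (f x + f y) ^ n := by rw [add_pow, ← mul_sum, mul_assoc]

lemma exists_lt_two_pow_le_two_mul {n : ℕ} (hn : n ≠ 0) : ∃ k, n < 2 ^ k ∧ 2 ^ k ≤ 2 * n :=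
  ⟨Nat.log 2 n + 1, Nat.lt_pow_succ_log_self one_lt_two n, by
    rw [pow_succ, mul_comm]; exact Nat.mul_le_mul_left 2 (Nat.pow_log_le_self 2 hn)⟩

lemma NNReal.le_of_forall_pow_le_mul_pow {a b c : ℝ≥0} (p : ℕ)
    (h : ∀ n : ℕ, 0 < n → a ^ n ≤ c * n ^ p * b ^ n) : a ≤ b := by
  by_contra! hba
  have hb : 0 < b := by
    refine pos_of_ne_zero fun hb => hba.ne' ?_
    simpa [hb] using h 1 one_pos
  have hr : (1 : ℝ) < a / b := by
    rw [one_lt_div (by exact_mod_cast hb)]; exact_mod_cast hba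
  have hlim := (tendsto_pow_const_div_const_pow_of_one_lt p hr).const_mul (c : ℝ)
  rw [mul_zero] at hlim
  obtain ⟨n, hsmall, hn⟩ := ((hlim.eventually (gt_mem_nhds one_pos)).and
    (eventually_gt_atTop 0)).exists
  have ha : (0 : ℝ) < a := by exact_mod_cast hb.trans hba
  rw [div_pow, div_div_eq_mul_div, mul_div_assoc', div_lt_one (by positivity)] at hsmall
  have hbig : (a : ℝ) ^ n ≤ c * n ^ p * b ^ n := by exact_mod_cast h n hn
  linarith

/-- If `f : K → ℝ≥0` is multiplicative, vanishes exactly at `0`, satisfies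
`f (x + y) ≤ A * max (f x) (f y)` for some `A > 0`, and satisfies `f (n • 1) ≤ C * n`
for some `C > 0` and all integers `n > 0`, then `f` satisfies the triangle
inequality, i.e. `f` is an absolute value on `K`. -/
theorem absoluteValue_of_bounded_on_nat {K : Type*} [Field K] (f : K → ℝ≥0)
    (h0 : ∀ x, f x = 0 ↔ x = 0)
    (hmul : ∀ x y, f (x * y) = f x * f y)
    (hA : ∃ A : ℝ≥0, 0 < A ∧ ∀ x y, f (x + y) ≤ A * max (f x) (f y))
    (hC : ∃ C : ℝ≥0, 0 < C ∧ ∀ n : ℕ, 0 < n → f ((n : K)) ≤ C * n) :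
    ∀ x y, f (x + y) ≤ f x + f y := by
  obtain ⟨A, -, hA⟩ := hA
  obtain ⟨C, -, hC⟩ := hC
  have hf0 : f 0 = 0 := (h0 0).mpr rfl
  have hf1 : f 1 = 1 := map_one_of_map_mul hmul (by simp [h0])
  obtain ⟨p, hp⟩ := pow_unbounded_of_one_lt A one_lt_two
  intro x y
  refine NNReal.le_of_forall_pow_le_mul_pow (c := 2 ^ p * C) p fun n hn => ?_
  obtain ⟨k, hnk, hk⟩ := exists_lt_two_pow_le_two_mul hn.ne'
  have hAk : A ^ k ≤ (2 * n) ^ p :=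
    calc A ^ k ≤ (2 ^ p) ^ k := pow_le_pow_left₀ zero_le hp.le k
      _ = (2 ^ k) ^ p := by rw [← pow_mul, ← pow_mul, mul_comm]
      _ ≤ (2 * n) ^ p := by gcongr; exact_mod_cast hk
  calc f (x + y) ^ n ≤ A ^ k * C * (f x + f y) ^ n := apply_add_pow_le hf0 hf1 hmul hA hC x y hnk
    _ ≤ (2 * n) ^ p * C * (f x + f y) ^ n := by gcongr
    _ = 2 ^ p * C * n ^ p * (f x + f y) ^ n := by ring
end

section
/- Let K be a field. A function f : K → ℝ≥0 is an absolute value on K if and only if it satisfies: f(x) = 0 if and only if x = 0; f(xy) = f(x)·f(y) for all x, y; and f(x + y) ≤ 2 · max(f(x), f(y)) for all x, y ∈ K. -/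
/-!
Artin's argument. The quasi-triangle inequality `f (x + y) ≤ 2 * max (f x) (f y)` bounds a sum of
`2 ^ k` terms by `2 ^ k` times their maximum, hence a sum of `m` terms by `2 m` times it; in
particular `f n ≤ 2 n` on the naturals. Expanding `(x + y) ^ n` binomially and using
multiplicativity gives `f (x + y) ^ n ≤ 4 (n + 1) (f x + f y) ^ n`, and taking `n`-th roots
as `n → ∞` kills the polynomial factor.
-/

open NNReal Finset Filter Topology

section QuasiTriangle

variable {M : Type*} {f : M → ℝ≥0}

theorem map_sum_le_two_pow_mul [AddCommMonoid M] {ι : Type*}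
    (h0 : f 0 = 0) (hadd : ∀ x y, f (x + y) ≤ 2 * max (f x) (f y)) (a : ι → M) {C : ℝ≥0}
    (k : ℕ) (s : Finset ι) (hs : #s ≤ 2 ^ k) (hC : ∀ i ∈ s, f (a i) ≤ C) :
    f (∑ i ∈ s, a i) ≤ 2 ^ k * C := by
  classical
  induction k generalizing s with
  | zero =>
    rcases Nat.le_one_iff_eq_zero_or_eq_one.1 hs with hs | hs
    · simp [card_eq_zero.1 hs, h0]
    · obtain ⟨i, rfl⟩ := card_eq_one.1 hs
      simpa using hC i (mem_singleton_self i)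
  | succ k ih =>
    obtain ⟨t, hts, ht⟩ := exists_subset_card_eq (min_le_right (2 ^ k) #s)
    have hsdiff : #(s \ t) ≤ 2 ^ k := by
      rw [card_sdiff_of_subset hts, ht]
      rw [pow_succ] at hs
      omega
    calc f (∑ i ∈ s, a i)
        ≤ 2 * max (f (∑ i ∈ s \ t, a i)) (f (∑ i ∈ t, a i)) :=
          (sum_sdiff (f := a) hts).symm ▸ hadd _ _
      _ ≤ 2 * (2 ^ k * C) := by
        gcongr
        exact max_le (ih _ hsdiff fun i hi => hC i (sdiff_subset hi))
          (ih _ (ht ▸ min_le_left _ _) fun i hi => hC i (hts hi))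
      _ = 2 ^ (k + 1) * C := by ring

theorem map_sum_le_two_mul_card_mul [AddCommMonoid M] {ι : Type*}
    (h0 : f 0 = 0) (hadd : ∀ x y, f (x + y) ≤ 2 * max (f x) (f y)) (a : ι → M) {C : ℝ≥0}
    (s : Finset ι) (hC : ∀ i ∈ s, f (a i) ≤ C) :
    f (∑ i ∈ s, a i) ≤ 2 * #s * C := by
  classical
  rcases s.eq_empty_or_nonempty with rfl | hne
  · simp [h0]
  set k := Nat.log 2 #s
  have hcard : #s ≤ 2 ^ (k + 1) := (Nat.lt_pow_succ_log_self one_lt_two _).le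
  have hpow : (2 : ℝ≥0) ^ (k + 1) ≤ 2 * #s := by
    rw [pow_succ']
    gcongr
    exact_mod_cast Nat.pow_log_le_self 2 hne.card_pos.ne'
  calc f (∑ i ∈ s, a i) ≤ 2 ^ (k + 1) * C := map_sum_le_two_pow_mul h0 hadd a _ s hcard hC
    _ ≤ 2 * #s * C := by gcongr

theorem map_natCast_le_two_mul [AddCommMonoidWithOne M] (h0 : f 0 = 0) (h1 : f 1 ≤ 1)
    (hadd : ∀ x y, f (x + y) ≤ 2 * max (f x) (f y)) (n : ℕ) : f n ≤ 2 * n := by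
  simpa using map_sum_le_two_mul_card_mul h0 hadd (fun _ => (1 : M)) (range n) fun _ _ => h1

end QuasiTriangle

theorem le_of_forall_pow_le_mul_succ_mul_pow {a b C : ℝ} (hb : 0 ≤ b)
    (h : ∀ n : ℕ, a ^ n ≤ C * (n + 1) * b ^ n) : a ≤ b := by
  by_contra! hba
  have ha : 0 < a := hb.trans_lt hba
  have hr : b / a < 1 := (div_lt_one ha).2 hba
  have hlim : Tendsto (fun n : ℕ => C * ((n * (b / a) ^ n) + (b / a) ^ n)) atTop (𝓝 0) := by
    simpa using ((tendsto_self_mul_const_pow_of_lt_one (by positivity) hr).add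
      (tendsto_pow_atTop_nhds_zero_of_lt_one (by positivity) hr)).const_mul C
  refine absurd (ge_of_tendsto' hlim fun n => ?_) (not_le.2 one_pos)
  rw [div_pow, ← add_one_mul, ← mul_div_assoc, ← mul_div_assoc, le_div_iff₀ (by positivity),
    one_mul]
  exact (h n).trans_eq (mul_assoc _ _ _)

section MonoidWithZeroHom

variable {R : Type*} [CommSemiring R] (f : R →*₀ ℝ≥0)
  (hadd : ∀ x y, f (x + y) ≤ 2 * max (f x) (f y))
include hadd

theorem map_add_pow_le (x y : R) (n : ℕ) : f (x + y) ^ n ≤ 4 * (n + 1) * (f x + f y) ^ n := by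
  have hterm : ∀ k ∈ range (n + 1),
      f (x ^ k * y ^ (n - k) * n.choose k) ≤ 2 * (f x + f y) ^ n := by
    intro k hk
    have hbinom : f x ^ k * f y ^ (n - k) * n.choose k ≤ (f x + f y) ^ n := by
      rw [add_pow]
      exact single_le_sum (f := fun i => f x ^ i * f y ^ (n - i) * n.choose i)
        (fun _ _ => zero_le) hk
    calc f (x ^ k * y ^ (n - k) * n.choose k)
        = f x ^ k * f y ^ (n - k) * f (n.choose k) := by simp only [map_mul, map_pow]
      _ ≤ f x ^ k * f y ^ (n - k) * (2 * n.choose k) := by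
        gcongr
        exact map_natCast_le_two_mul (map_zero f) (map_one f).le hadd _
      _ ≤ 2 * (f x + f y) ^ n := by
        rw [mul_left_comm]
        gcongr
  calc f (x + y) ^ n = f (∑ k ∈ range (n + 1), x ^ k * y ^ (n - k) * n.choose k) := by
        rw [← map_pow, add_pow]
    _ ≤ 2 * #(range (n + 1)) * (2 * (f x + f y) ^ n) :=
        map_sum_le_two_mul_card_mul (map_zero f) hadd _ _ hterm
    _ = 4 * (n + 1) * (f x + f y) ^ n := by
        rw [card_range]
        push_cast
        ring

theorem map_add_le_add (x y : R) : f (x + y) ≤ f x + f y := by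
  refine NNReal.coe_le_coe.1 (le_of_forall_pow_le_mul_succ_mul_pow (C := 4) (by positivity)
    fun n => ?_)
  exact_mod_cast map_add_pow_le f hadd x y n

end MonoidWithZeroHom

/-- A function `f : K → ℝ≥0` is an absolute value (vanishing exactly at `0`,
multiplicative, triangle inequality) iff it vanishes exactly at `0`, is
multiplicative, and satisfies `f (x + y) ≤ 2 * max (f x) (f y)`. -/
theorem absoluteValue_iff_two_max {K : Type*} [Field K] (f : K → ℝ≥0) :
    ((∀ x, f x = 0 ↔ x = 0) ∧ (∀ x y, f (x * y) = f x * f y) ∧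
        (∀ x y, f (x + y) ≤ f x + f y)) ↔
      ((∀ x, f x = 0 ↔ x = 0) ∧ (∀ x y, f (x * y) = f x * f y) ∧
        (∀ x y, f (x + y) ≤ 2 * max (f x) (f y))) := by
  refine and_congr_right fun h0 => and_congr_right fun hmul =>
    ⟨fun htri x y => ?_, fun hadd => ?_⟩
  · rw [two_mul]
    exact (htri x y).trans (add_le_add (le_max_left _ _) (le_max_right _ _))
  · have hf1 : f 1 = 1 := by
      have hne : f 1 ≠ 0 := fun h => one_ne_zero ((h0 1).1 h)
      exact (mul_eq_left₀ hne).1 (by rw [← hmul, one_mul])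
    let g : K →*₀ ℝ≥0 :=
      { toFun := f, map_zero' := (h0 0).2 rfl, map_one' := hf1, map_mul' := hmul }
    exact map_add_le_add g hadd
end

section
/- Let K be a field of characteristic p > 0 and let f : K → ℝ≥0 satisfy: f(x) = 0 if and only if x = 0; f(xy) = f(x)·f(y) for all x, y; and there exists A > 0 such that f(x + y) ≤ A · max(f(x), f(y)) for all x, y. Then f is an ultrametric absolute value on K, i.e. f(x + y) ≤ max(f(x), f(y)) for all x, y ∈ K. -/
open NNReal

/-!
Raising to the power `n = 2 ^ k` and expanding binomially, `f (x + y) ^ n` is `f` of a sum of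
`n + 1 ≤ 2 ^ (k + 1)` terms `x ^ i * y ^ (n - i) * (n.choose i)`. Iterating the quasi-ultrametric
inequality bounds `f` of such a sum by `A ^ (k + 1)` times its largest summand, and in positive
characteristic `f` is bounded on the image of `ℕ`, say by `M`. Hence
`f (x + y) ^ n ≤ A ^ (k + 1) * M * max (f x) (f y) ^ n`, and taking `n`-th roots the constant
`(A ^ (k + 1) * M) ^ (1 / n)` tends to `1`.
-/

open Finset Filter Topology

theorem CharP.finite_range_natCast (R : Type*) [AddGroupWithOne R] (p : ℕ) [CharP R p]
    (hp : p ≠ 0) : (Set.range (Nat.cast : ℕ → R)).Finite :=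
  ((Set.finite_lt_nat p).image _).subset <| by
    rintro _ ⟨n, rfl⟩
    exact ⟨n % p, Nat.mod_lt n (Nat.pos_of_ne_zero hp), (CharP.cast_eq_mod R p n).symm⟩

theorem apply_sum_le_pow_mul_sup {α ι : Type*} [AddCommMonoid α] {f : α → ℝ≥0} {A : ℝ≥0}
    (hf0 : f 0 = 0) (hA : ∀ x y, f (x + y) ≤ A * max (f x) (f y)) (g : ι → α) :
    ∀ {k : ℕ} {s : Finset ι}, #s ≤ 2 ^ k → f (∑ i ∈ s, g i) ≤ A ^ k * s.sup (f ∘ g)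
  | 0, s, hs => by
    rcases Nat.le_one_iff_eq_zero_or_eq_one.1 hs with h | h
    · simp [card_eq_zero.1 h, hf0]
    · obtain ⟨i, rfl⟩ := card_eq_one.1 h
      simp
  | k + 1, s, hs => by
    classical
    rw [pow_succ] at hs
    obtain ⟨t, hts, ht⟩ := exists_subset_card_eq (Nat.div_le_self #s 2)
    have hst : #(s \ t) ≤ 2 ^ k := by rw [card_sdiff_of_subset hts, ht]; omega
    have htk : #t ≤ 2 ^ k := by rw [ht]; omega
    calc f (∑ i ∈ s, g i) = f (∑ i ∈ s \ t, g i + ∑ i ∈ t, g i) := by rw [sum_sdiff hts]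
      _ ≤ A * max (A ^ k * (s \ t).sup (f ∘ g)) (A ^ k * t.sup (f ∘ g)) :=
        (hA _ _).trans (by gcongr <;> exact apply_sum_le_pow_mul_sup hf0 hA g ‹_›)
      _ ≤ A * (A ^ k * s.sup (f ∘ g)) := by
        gcongr
        exact max_le (by gcongr; exact sdiff_subset) (by gcongr)
      _ = A ^ (k + 1) * s.sup (f ∘ g) := by ring

theorem MonoidWithZeroHom.apply_add_pow_le {R : Type*} [CommSemiring R] (φ : R →*₀ ℝ≥0)
    {A M : ℝ≥0} (hA : ∀ x y, φ (x + y) ≤ A * max (φ x) (φ y)) (hM : ∀ n : ℕ, φ n ≤ M)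
    {n k : ℕ} (hnk : n + 1 ≤ 2 ^ k) (x y : R) :
    φ (x + y) ^ n ≤ A ^ k * M * max (φ x) (φ y) ^ n := by
  rw [← map_pow, add_pow, mul_assoc]
  refine (apply_sum_le_pow_mul_sup (map_zero φ) hA _ (by rwa [card_range])).trans ?_
  gcongr
  refine Finset.sup_le fun i hi => ?_
  rw [Function.comp_apply, map_mul, map_mul, map_pow, map_pow]
  calc φ x ^ i * φ y ^ (n - i) * φ (n.choose i)
      ≤ max (φ x) (φ y) ^ i * max (φ x) (φ y) ^ (n - i) * M := by
        gcongr
        exacts [le_max_left _ _, le_max_right _ _, hM _]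
    _ = M * max (φ x) (φ y) ^ n := by
        rw [← pow_add, Nat.add_sub_cancel' (mem_range_succ_iff.1 hi), mul_comm]

theorem NNReal.le_of_forall_pow_two_pow_le {a b A M : ℝ≥0} (hA : A ≠ 0) (hM : M ≠ 0)
    (h : ∀ k : ℕ, a ^ 2 ^ k ≤ A ^ k * M * b ^ 2 ^ k) : a ≤ b := by
  have hroot (k : ℕ) : a ≤ A ^ ((k : ℝ) / 2 ^ k) * M ^ ((2 : ℝ) ^ k)⁻¹ * b := by
    have hn : (2 ^ k : ℝ) ≠ 0 := by positivity
    have hAk : (A ^ ((k : ℝ) / 2 ^ k)) ^ 2 ^ k = A ^ k := by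
      rw [← rpow_natCast, ← rpow_mul, ← rpow_natCast A]; push_cast; field_simp
    have hMk : (M ^ ((2 : ℝ) ^ k)⁻¹) ^ 2 ^ k = M := by
      rw [← rpow_natCast, ← rpow_mul]; push_cast; rw [inv_mul_cancel₀ hn, rpow_one]
    refine (pow_le_pow_iff_left₀ zero_le zero_le (by positivity : 2 ^ k ≠ 0)).1 ?_
    rw [mul_pow, mul_pow, hAk, hMk]
    exact h k
  have hexp : Tendsto (fun k : ℕ => (k : ℝ) / 2 ^ k) atTop (𝓝 0) := by
    simpa using tendsto_pow_const_div_const_pow_of_one_lt 1 one_lt_two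
  have hinv : Tendsto (fun k : ℕ => ((2 : ℝ) ^ k)⁻¹) atTop (𝓝 0) :=
    tendsto_inv_atTop_zero.comp (tendsto_pow_atTop_atTop_of_one_lt one_lt_two)
  have hlim := ((tendsto_const_nhds.nnrpow hexp (.inl hA)).mul
    (tendsto_const_nhds.nnrpow hinv (.inl hM))).mul_const b
  rw [rpow_zero, rpow_zero, one_mul, one_mul] at hlim
  exact ge_of_tendsto' hlim hroot

/-- Over a field of characteristic `p > 0`, any multiplicative `f : K → ℝ≥0`
vanishing exactly at `0` and satisfying `f (x + y) ≤ A * max (f x) (f y)` for some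
`A > 0` is an ultrametric absolute value. -/
theorem ultrametric_of_charP {K : Type*} [Field K] (p : ℕ) (hp : 0 < p) [CharP K p]
    (f : K → ℝ≥0)
    (h0 : ∀ x, f x = 0 ↔ x = 0)
    (hmul : ∀ x y, f (x * y) = f x * f y)
    (hA : ∃ A : ℝ≥0, 0 < A ∧ ∀ x y, f (x + y) ≤ A * max (f x) (f y)) :
    ∀ x y, f (x + y) ≤ max (f x) (f y) := by
  obtain ⟨A, hA0, hA⟩ := hA
  have hf1 : f 1 = 1 := by
    have h := hmul 1 1
    rwa [one_mul, eq_comm, mul_eq_left₀ fun h' => one_ne_zero ((h0 1).1 h')] at h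
  let φ : K →*₀ ℝ≥0 :=
    { toFun := f, map_zero' := (h0 0).2 rfl, map_one' := hf1, map_mul' := hmul }
  obtain ⟨M, hM⟩ := ((CharP.finite_range_natCast K p hp.ne').image f).bddAbove
  have hfM : ∀ n : ℕ, f n ≤ M := fun n => hM (Set.mem_image_of_mem f (Set.mem_range_self n))
  have hM0 : M ≠ 0 := (one_pos.trans_le (by simpa [hf1] using hfM 1)).ne'
  intro x y
  refine NNReal.le_of_forall_pow_two_pow_le hA0.ne' (mul_ne_zero hA0.ne' hM0) fun k => ?_
  have hnk : 2 ^ k + 1 ≤ 2 ^ (k + 1) := by rw [pow_succ]; have := k.one_le_two_pow; omega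
  have h := φ.apply_add_pow_le hA hfM hnk x y
  rwa [pow_succ, mul_assoc (A ^ k)] at h
end

section
/- Let K be a field equipped with a nontrivial ultrametric absolute value |·|, let U be a nonempty open subset of K, and let (rₙ)_{n≥1} be a strictly decreasing sequence of strictly positive real numbers tending to 0. Then U can be partitioned into pairwise disjoint open balls of the form B(a, rₙ) = {x ∈ K : |x − a| < rₙ} with a ∈ U and n ≥ 1; that is, there exists a family of such balls that are pairwise disjoint and whose union is U. -/
open Filter

/-- In a field with a nontrivial ultrametric absolute value, any nonempty open set `U`
can be partitioned into pairwise-disjoint open balls `B(a, rₙ)` with centers `a ∈ U`,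
where `(rₙ)` is any prescribed strictly decreasing sequence of positive radii
tending to `0`. -/
theorem open_partition_into_balls {K : Type*} [Field K] (f : AbsoluteValue K ℝ)
    (hu : ∀ x y : K, f (x + y) ≤ max (f x) (f y))
    (hnontriv : ∃ x : K, x ≠ 0 ∧ f x ≠ 1)
    (r : ℕ → ℝ) (hrpos : ∀ n, 0 < r n) (hranti : StrictAnti r)
    (hrlim : Tendsto r atTop (nhds 0))
    (U : Set K) (hUne : U.Nonempty) (hUopen : @IsOpen K (absTopology f) U) :
    ∃ 𝓑 : Set (Set K),
      (∀ b ∈ 𝓑, ∃ a ∈ U, ∃ n : ℕ, b = {x : K | f (x - a) < r n}) ∧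
      𝓑.PairwiseDisjoint id ∧
      ⋃₀ 𝓑 = U := by
  classical
  -- symmetry of distance
  have hsymm : ∀ x y : K, f (x - y) = f (y - x) := by
    intro x y; rw [← neg_sub, f.map_neg]
  -- ultrametric triangle for differences
  have htri : ∀ x y z : K, f (x - z) ≤ max (f (x - y)) (f (y - z)) := by
    intro x y z
    have : x - z = (x - y) + (y - z) := by ring
    rw [this]; exact hu _ _
  -- recentring: balls of same radius around a common point coincide (one inclusion)
  have hball : ∀ (x y : K) (s : ℝ), f (y - x) < s →
      {z : K | f (z - y) < s} ⊆ {z : K | f (z - x) < s} := by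
    intro x y s hyx z hz
    exact lt_of_le_of_lt (htri z y x) (max_lt hz hyx)
  -- every point of an open set has a basic ball inside it
  have key : ∀ V : Set K,
      TopologicalSpace.GenerateOpen
        {s : Set K | ∃ (a : K) (r : ℝ), 0 < r ∧ s = {x : K | f (x - a) < r}} V →
      ∀ x ∈ V, ∃ s : ℝ, 0 < s ∧ {z : K | f (z - x) < s} ⊆ V := by
    intro V hV
    induction hV with
    | basic t ht =>
        obtain ⟨a, s, hs, rfl⟩ := ht
        intro x hx
        exact ⟨s, hs, hball a x s hx⟩
    | univ => intro x _; exact ⟨1, one_pos, fun _ _ => trivial⟩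
    | inter t₁ t₂ _ _ ih₁ ih₂ =>
        intro x hx
        obtain ⟨s₁, hs₁, h₁⟩ := ih₁ x hx.1
        obtain ⟨s₂, hs₂, h₂⟩ := ih₂ x hx.2
        refine ⟨min s₁ s₂, lt_min hs₁ hs₂, fun z hz => ?_⟩
        have hz' : f (z - x) < min s₁ s₂ := hz
        exact ⟨h₁ (lt_of_lt_of_le hz' (min_le_left _ _)),
          h₂ (lt_of_lt_of_le hz' (min_le_right _ _))⟩
    | sUnion S _ ih =>
        intro x hx
        obtain ⟨t, ht, hxt⟩ := hx
        obtain ⟨s, hs, hsub⟩ := ih t ht x hxt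
        exact ⟨s, hs, hsub.trans (Set.subset_sUnion_of_mem ht)⟩
  -- for each x ∈ U there is some n with B(x, r n) ⊆ U
  have hexists : ∀ x ∈ U, ∃ n : ℕ, {z : K | f (z - x) < r n} ⊆ U := by
    intro x hx
    obtain ⟨s, hs, hsub⟩ := key U hUopen x hx
    obtain ⟨n, hn⟩ := (hrlim.eventually (gt_mem_nhds hs)).exists
    exact ⟨n, fun z hz => hsub (lt_trans hz hn)⟩
  -- minimal index
  let N : K → ℕ := fun x =>
    if h : ∃ n : ℕ, {z : K | f (z - x) < r n} ⊆ U then Nat.find h else 0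
  have hNspec : ∀ x ∈ U, {z : K | f (z - x) < r (N x)} ⊆ U := by
    intro x hx
    have h := hexists x hx
    simp only [N, dif_pos h]
    exact Nat.find_spec h
  have hNmin : ∀ x ∈ U, ∀ n : ℕ, {z : K | f (z - x) < r n} ⊆ U → N x ≤ n := by
    intro x hx n hn
    have h := hexists x hx
    simp only [N, dif_pos h]
    exact Nat.find_le hn
  -- membership of center
  have hcenter : ∀ (x : K) (n : ℕ), x ∈ {z : K | f (z - x) < r n} := by
    intro x n
    simp only [Set.mem_setOf_eq, sub_self, map_zero]
    exact hrpos n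
  -- if two chosen balls meet with N x ≤ N y, they are equal
  have hmeet : ∀ x ∈ U, ∀ y ∈ U, N x ≤ N y →
      ({z : K | f (z - x) < r (N x)} ∩ {z : K | f (z - y) < r (N y)}).Nonempty →
      {z : K | f (z - x) < r (N x)} = {z : K | f (z - y) < r (N y)} := by
    intro x hx y hy hNle ⟨w, hwx, hwy⟩
    have hrle : r (N y) ≤ r (N x) := hranti.antitone hNle
    -- f (y - x) < r (N x)
    have hyx : f (y - x) < r (N x) := by
      refine lt_of_le_of_lt (htri y w x) (max_lt ?_ hwx)
      rw [hsymm]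
      exact lt_of_lt_of_le hwy hrle
    -- so B(y, r (N x)) = B(x, r (N x))
    have heq : {z : K | f (z - y) < r (N x)} = {z : K | f (z - x) < r (N x)} := by
      apply Set.Subset.antisymm (hball x y _ hyx)
      apply hball y x _
      rw [hsymm]; exact hyx
    -- hence N y ≤ N x, so N x = N y
    have hNy : N y ≤ N x := hNmin y hy (N x) (heq ▸ hNspec x hx)
    have : N x = N y := le_antisymm hNle hNy
    rw [← this, ← heq]
  refine ⟨(fun x => {z : K | f (z - x) < r (N x)}) '' U, ?_, ?_, ?_⟩
  · rintro b ⟨a, ha, rfl⟩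
    exact ⟨a, ha, N a, rfl⟩
  · rintro b ⟨x, hx, rfl⟩ c ⟨y, hy, rfl⟩ hne
    simp only [Function.onFun, id_eq]
    rw [Set.disjoint_left]
    intro w hwb hwc
    rcases le_total (N x) (N y) with h | h
    · exact hne (hmeet x hx y hy h ⟨w, hwb, hwc⟩)
    · exact hne ((hmeet y hy x hx h ⟨w, hwc, hwb⟩).symm)
  · apply Set.Subset.antisymm
    · rintro z ⟨b, ⟨x, hx, rfl⟩, hz⟩
      exact hNspec x hx hz
    · intro x hx
      exact ⟨_, ⟨x, hx, rfl⟩, hcenter x (N x)⟩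
end

section
/- Let K be a field complete with respect to a nontrivial absolute value |·|_K, and let E be a finite field extension of K. Then there is at most one absolute value on E extending |·|_K: if |·|₁ and |·|₂ are absolute values on E whose restrictions to K both equal |·|_K, then |·|₁ = |·|₂. -/
/-- A sequence in a field `K` is Cauchy with respect to the absolute value `f`. -/
def AbsCauchySeq {K : Type*} [Field K] (f : AbsoluteValue K ℝ) (x : ℕ → K) : Prop :=
  ∀ ε : ℝ, 0 < ε → ∃ N : ℕ, ∀ m ≥ N, ∀ n ≥ N, f (x m - x n) < ε

/-- A field `K` is complete with respect to the absolute value `f` if every Cauchy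
sequence (for the metric `d(x,y) = f (x - y)`) converges. -/
def AbsComplete {K : Type*} [Field K] (f : AbsoluteValue K ℝ) : Prop :=
  ∀ x : ℕ → K, AbsCauchySeq f x →
    ∃ l : K, ∀ ε : ℝ, 0 < ε → ∃ N : ℕ, ∀ n ≥ N, f (x n - l) < ε

/-!
Two absolute values on `E` extending `|·|_K` are norms on the finite-dimensional normed space `E`
over the complete nontrivially normed field `K`, hence equivalent: `|x|₁ ≤ C |x|₂` for some `C`.
Applied to `xⁿ` this reads `(|x|₁ / |x|₂)ⁿ ≤ C` for all `n`, so `|x|₁ ≤ |x|₂`; by symmetry the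
two absolute values agree.
-/

theorem AbsComplete.completeSpace {K : Type*} [Field K] {f : AbsoluteValue K ℝ}
    (hf : AbsComplete f) : CompleteSpace (WithAbs f) := by
  refine Metric.complete_of_cauchySeq_tendsto fun u hu ↦ ?_
  obtain ⟨l, hl⟩ := hf (fun n ↦ (u n).ofAbs) fun ε hε ↦ by
    simpa only [dist_eq_norm, WithAbs.norm_eq_apply_ofAbs, WithAbs.ofAbs_sub] using
      Metric.cauchySeq_iff.mp hu ε hε
  refine ⟨WithAbs.toAbs f l, Metric.tendsto_atTop.mpr fun ε hε ↦ ?_⟩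
  simpa only [dist_eq_norm, WithAbs.norm_eq_apply_ofAbs, WithAbs.ofAbs_sub] using hl ε hε

namespace WithAbs

variable {K E : Type*} [Field K] [Field E] [Algebra K E] {fK : AbsoluteValue K ℝ}
  {f : AbsoluteValue E ℝ}

noncomputable abbrev normedSpaceOfComp (h : ∀ c, f (algebraMap K E c) = fK c) :
    NormedSpace (WithAbs fK) (WithAbs f) where
  norm_smul_le c x := le_of_eq <| by
    change f (c.ofAbs • x.ofAbs) = fK c.ofAbs * f x.ofAbs
    rw [Algebra.smul_def, map_mul, h]

end WithAbs

namespace AbsoluteValue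

open WithAbs

variable {K E : Type*} [Field K] [Field E] [Algebra K E] {fK : AbsoluteValue K ℝ}

theorem exists_le_mul_of_comp_algebraMap_eq [FiniteDimensional K E] (hK : fK.IsNontrivial)
    [CompleteSpace (WithAbs fK)] {f₁ f₂ : AbsoluteValue E ℝ}
    (h₁ : ∀ c, f₁ (algebraMap K E c) = fK c) (h₂ : ∀ c, f₂ (algebraMap K E c) = fK c) :
    ∃ C, ∀ x, f₁ x ≤ C * f₂ x := by
  obtain ⟨a, ha₀, ha₁⟩ := hK
  let := NontriviallyNormedField.ofNormNeOne ⟨toAbs fK a, (toAbs_eq_zero fK).not.2 ha₀, ha₁⟩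
  let := normedSpaceOfComp h₁
  let := normedSpaceOfComp h₂
  let id₂₁ : WithAbs f₂ →ₗ[WithAbs fK] WithAbs f₁ :=
    ((linearEquiv (WithAbs fK) f₂).trans (linearEquiv (WithAbs fK) f₁).symm).toLinearMap
  obtain ⟨C, -, hC⟩ := (LinearMap.toContinuousLinearMap id₂₁).bound
  exact ⟨C, fun x ↦ hC (toAbs f₂ x)⟩

theorem le_of_forall_le_mul {R : Type*} [Semiring R] [Nontrivial R]
    {f₁ f₂ : AbsoluteValue R ℝ} (C : ℝ) (h : ∀ x, f₁ x ≤ C * f₂ x) (x : R) : f₁ x ≤ f₂ x := by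
  rcases eq_or_ne x 0 with rfl | hx
  · simp
  have hpos : 0 < f₂ x := f₂.pos hx
  by_contra! hlt
  obtain ⟨n, hn⟩ := pow_unbounded_of_one_lt C ((one_lt_div hpos).2 hlt)
  have hpow := h (x ^ n)
  rw [f₁.map_pow, f₂.map_pow, ← div_le_iff₀ (by positivity), ← div_pow] at hpow
  exact hn.not_ge hpow

end AbsoluteValue

/-- If `K` is complete with respect to a nontrivial absolute value `fK` and `E` is a
finite extension of `K`, then there is at most one absolute value on `E` extending
`fK`. -/
theorem uniqueness_of_extension {K E : Type*} [Field K] [Field E] [Algebra K E]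
    [FiniteDimensional K E] (fK : AbsoluteValue K ℝ)
    (hnontriv : ∃ x : K, x ≠ 0 ∧ fK x ≠ 1) (hcomplete : AbsComplete fK)
    (f₁ f₂ : AbsoluteValue E ℝ)
    (h₁ : ∀ c : K, f₁ (algebraMap K E c) = fK c)
    (h₂ : ∀ c : K, f₂ (algebraMap K E c) = fK c) :
    f₁ = f₂ := by
  have := hcomplete.completeSpace
  obtain ⟨C₁₂, hC₁₂⟩ := AbsoluteValue.exists_le_mul_of_comp_algebraMap_eq hnontriv h₁ h₂
  obtain ⟨C₂₁, hC₂₁⟩ := AbsoluteValue.exists_le_mul_of_comp_algebraMap_eq hnontriv h₂ h₁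
  ext x
  exact le_antisymm (AbsoluteValue.le_of_forall_le_mul C₁₂ hC₁₂ x)
    (AbsoluteValue.le_of_forall_le_mul C₂₁ hC₂₁ x)
end

section
/- (Second theorem of Ostrowski) Let K be a field complete with respect to an absolute value |·| that is archimedean (not ultrametric). Then K is isomorphic to ℝ or to ℂ: there exists a ring isomorphism from K onto ℝ, or onto ℂ, which is a homeomorphism for the topology on K induced by |·| and the usual topology on ℝ or ℂ. -/
/-!
By Ostrowski's first theorem, `f` restricted to `ℚ` is a power `|·| ^ (1 / c)` of the usual
absolute value (it is unbounded on `ℕ`, since `f` is archimedean, and this also forces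
characteristic zero). Artin's trick shows that `f ^ c` is again an absolute value; it has the same
balls and Cauchy sequences as `f` and makes `K` a complete normed field containing `ℚ`
isometrically. Extending by continuity embeds `ℝ` isometrically, so `K` is a normed `ℝ`-algebra
that is a field, hence `ℝ` or `ℂ` by Gelfand–Mazur, and the isomorphism is a homeomorphism
because `K` is finite-dimensional over `ℝ`.
-/

open Filter Topology Finset

theorem le_of_forall_pow_le_succ_mul_pow {a b : ℝ} (hb : 0 ≤ b)
    (h : ∀ n : ℕ, a ^ n ≤ (n + 1) * b ^ n) : a ≤ b := by
  by_contra! hba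
  have ha : 0 < a := hb.trans_lt hba
  set r := b / a
  have hr : 0 ≤ r := div_nonneg hb ha.le
  have hr1 : r < 1 := (div_lt_one ha).2 hba
  have hlim : Tendsto (fun n : ℕ => (n + 1) * r ^ n) atTop (𝓝 0) := by
    simpa [add_mul] using (tendsto_self_mul_const_pow_of_lt_one hr hr1).add
      (tendsto_pow_atTop_nhds_zero_of_lt_one hr hr1)
  have hge : ∀ n : ℕ, 1 ≤ (n + 1) * r ^ n := fun n => by
    rw [div_pow, mul_div_assoc', one_le_div (by positivity)]
    exact h n
  linarith [ge_of_tendsto' hlim hge]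

namespace AbsoluteValue

section Artin

variable {R : Type*} [CommSemiring R] [Nontrivial R] (f : AbsoluteValue R ℝ) {c : ℝ}

/-- Artin's trick: the `n + 1` binomial terms of `(x + y) ^ n` each have `f ^ c`-size at most
`(f x ^ c + f y ^ c) ^ n`, and the factor `n + 1` disappears on taking `n`-th roots. -/
theorem rpow_add_le (hc : 0 < c) (hnat : ∀ n : ℕ, f n ^ c ≤ n) (x y : R) :
    f (x + y) ^ c ≤ f x ^ c + f y ^ c := by
  set s := f x ^ c + f y ^ c
  have hs : 0 ≤ s := add_nonneg (Real.rpow_nonneg (f.nonneg x) c) (Real.rpow_nonneg (f.nonneg y) c)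
  suffices f (x + y) ≤ s ^ c⁻¹ by
    calc f (x + y) ^ c ≤ (s ^ c⁻¹) ^ c := Real.rpow_le_rpow (f.nonneg _) this hc.le
      _ = s := Real.rpow_inv_rpow hs hc.ne'
  refine le_of_forall_pow_le_succ_mul_pow (Real.rpow_nonneg hs _) fun n => ?_
  have hterm : ∀ k ∈ range (n + 1), f (x ^ k * y ^ (n - k) * n.choose k) ≤ (s ^ c⁻¹) ^ n := by
    intro k hk
    rw [← Real.rpow_le_rpow_iff (f.nonneg _) (by positivity) hc,
      ← Real.rpow_pow_comm (by positivity), Real.rpow_inv_rpow hs hc.ne']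
    calc f (x ^ k * y ^ (n - k) * n.choose k) ^ c
        = (f x ^ c) ^ k * (f y ^ c) ^ (n - k) * f (n.choose k) ^ c := by
          have hx := f.nonneg x
          have hy := f.nonneg y
          rw [map_mul, map_mul, map_pow, map_pow, Real.mul_rpow (by positivity) (f.nonneg _),
            Real.mul_rpow (by positivity) (by positivity), Real.rpow_pow_comm hx,
            Real.rpow_pow_comm hy]
      _ ≤ (f x ^ c) ^ k * (f y ^ c) ^ (n - k) * n.choose k := by
          gcongr
          exact hnat _
      _ ≤ s ^ n := by
          rw [add_pow]
          exact single_le_sum (f := fun k => (f x ^ c) ^ k * (f y ^ c) ^ (n - k) * n.choose k)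
            (fun i _ => by positivity) hk
  calc f (x + y) ^ n = f (∑ k ∈ range (n + 1), x ^ k * y ^ (n - k) * n.choose k) := by
        rw [← map_pow, add_pow]
    _ ≤ ∑ k ∈ range (n + 1), f (x ^ k * y ^ (n - k) * n.choose k) := f.sum_le _ _
    _ ≤ ∑ k ∈ range (n + 1), (s ^ c⁻¹) ^ n := sum_le_sum hterm
    _ = (n + 1) * (s ^ c⁻¹) ^ n := by simp

noncomputable def rpow (hc : 0 < c) (hnat : ∀ n : ℕ, f n ^ c ≤ n) : AbsoluteValue R ℝ where
  toFun x := f x ^ c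
  map_mul' x y := by simp only [map_mul, Real.mul_rpow (f.nonneg x) (f.nonneg y)]
  nonneg' x := Real.rpow_nonneg (f.nonneg x) c
  eq_zero' x := by simp [Real.rpow_eq_zero (f.nonneg x) hc.ne']
  add_le' := f.rpow_add_le hc hnat

end Artin

theorem apply_natCast_le_one_of_charP {R : Type*} [CommRing R] (f : AbsoluteValue R ℝ)
    (p : ℕ) [hp : Fact p.Prime] [CharP R p] (n : ℕ) : f n ≤ 1 := by
  have : Nontrivial R := CharP.nontrivial_of_char_ne_one hp.out.ne_one
  have hfix : f n ^ p = f n := by rw [← map_pow, ← frobenius_def, map_natCast]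
  by_contra! h
  exact (lt_self_pow₀ h hp.out.one_lt).ne' hfix

theorem charZero_of_not_forall_natCast_le_one {R : Type*} [CommRing R] [IsDomain R]
    {f : AbsoluteValue R ℝ} (h : ¬ ∀ n : ℕ, f n ≤ 1) : CharZero R := by
  obtain hR | ⟨p, _, _⟩ := CharP.exists' R
  · exact hR
  · exact absurd (f.apply_natCast_le_one_of_charP p) h

theorem isNonarchimedean_of_forall_natCast_le_one {K : Type*} [Field K] {f : AbsoluteValue K ℝ}
    (h : ∀ n : ℕ, f n ≤ 1) : IsNonarchimedean f := by
  let := f.toNormedField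
  have := IsUltrametricDist.isUltrametricDist_of_forall_norm_natCast_le_one (R := K) h
  exact IsUltrametricDist.norm_add_le_max

theorem exists_rpow_ratCast_eq_abs {K : Type*} [Field K] [CharZero K] {f : AbsoluteValue K ℝ}
    (h : ¬ ∀ n : ℕ, f n ≤ 1) : ∃ c : ℝ, 0 < c ∧ ∀ q : ℚ, f q ^ c = |(q : ℝ)| := by
  let fℚ := f.comp (Rat.castHom K).injective
  have hℚ : ¬ ∀ n : ℕ, fℚ n ≤ 1 := fun hle =>
    h fun n => by
      have : f ((n : ℚ) : K) ≤ 1 := hle n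
      rwa [Rat.cast_natCast] at this
  obtain ⟨c, hc, hceq⟩ :=
    isEquiv_iff_exists_rpow_eq.1 (Rat.AbsoluteValue.equiv_real_of_unbounded hℚ)
  refine ⟨c, hc, fun q => ?_⟩
  have : f q ^ c = Rat.AbsoluteValue.real q := congrFun hceq q
  rwa [Rat.AbsoluteValue.real_eq_abs, Rat.cast_abs] at this

end AbsoluteValue

section NormedField

variable {K : Type*} [NormedField K] {f : AbsoluteValue K ℝ} {c : ℝ}

theorem AbsoluteValue.apply_lt_iff_norm_lt_rpow (hc : 0 < c) (hf : ∀ x, f x ^ c = ‖x‖) (x : K)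
    {r : ℝ} (hr : 0 ≤ r) : f x < r ↔ ‖x‖ < r ^ c := by
  rw [← hf, Real.rpow_lt_rpow_iff (f.nonneg x) hr hc]

theorem absTopology_eq_of_rpow_eq_norm (hc : 0 < c) (hf : ∀ x, f x ^ c = ‖x‖) :
    absTopology f = (inferInstance : TopologicalSpace K) := by
  have hball (a : K) {r : ℝ} (hr : 0 ≤ r) : {x | f (x - a) < r} = Metric.ball a (r ^ c) := by
    ext x
    rw [Set.mem_ofPred_eq, f.apply_lt_iff_norm_lt_rpow hc hf _ hr, Metric.mem_ball, dist_eq_norm]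
  refine (TopologicalSpace.isTopologicalBasis_of_isOpen_of_nhds ?_ ?_).eq_generateFrom.symm
  · rintro _ ⟨a, r, hr, rfl⟩
    rw [hball a hr.le]
    exact Metric.isOpen_ball
  · intro a u ha hu
    obtain ⟨ε, hε, hεu⟩ := Metric.isOpen_iff.1 hu a ha
    refine ⟨_, ⟨a, ε ^ c⁻¹, by positivity, rfl⟩, by simpa using Real.rpow_pos_of_pos hε c⁻¹, ?_⟩
    rwa [hball a (by positivity), Real.rpow_inv_rpow hε.le hc.ne']

theorem AbsComplete.completeSpace_s14 (hc : 0 < c) (hf : ∀ x, f x ^ c = ‖x‖) (h : AbsComplete f) :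
    CompleteSpace K := by
  refine Metric.complete_of_cauchySeq_tendsto fun u hu => ?_
  obtain ⟨l, hl⟩ := h u fun ε hε => by
    obtain ⟨N, hN⟩ := Metric.cauchySeq_iff.1 hu (ε ^ c) (by positivity)
    refine ⟨N, fun m hm n hn => (f.apply_lt_iff_norm_lt_rpow hc hf _ hε.le).2 ?_⟩
    simpa [dist_eq_norm] using hN m hm n hn
  refine ⟨l, Metric.tendsto_atTop.2 fun ε hε => ?_⟩
  obtain ⟨N, hN⟩ := hl (ε ^ c⁻¹) (by positivity)
  refine ⟨N, fun n hn => ?_⟩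
  have := (f.apply_lt_iff_norm_lt_rpow hc hf _ (by positivity)).1 (hN n hn)
  rwa [Real.rpow_inv_rpow hε.le hc.ne', ← dist_eq_norm] at this

end NormedField

theorem exists_ringHom_real_norm_eq {K : Type*} [NormedField K] [CharZero K] [CompleteSpace K]
    (h : ∀ q : ℚ, ‖(q : K)‖ = |(q : ℝ)|) : ∃ ι : ℝ →+* K, ∀ r : ℝ, ‖ι r‖ = ‖r‖ := by
  have hiso : Isometry (Rat.castHom K) := Isometry.of_dist_eq fun p q => by
    rw [dist_eq_norm, Rat.dist_eq, eq_ratCast, eq_ratCast, ← Rat.cast_sub, h, Rat.cast_sub]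
  have ue : IsUniformInducing (Rat.castHom ℝ) := Rat.isUniformEmbedding_coe_real.isUniformInducing
  have dr : DenseRange (Rat.castHom ℝ) := Rat.isDenseEmbedding_coe_real.dense
  refine ⟨IsDenseInducing.extendRingHom ue dr hiso.uniformContinuous, fun r => ?_⟩
  have hcont := (uniformContinuous_uniformly_extend ue dr hiso.uniformContinuous).continuous
  refine dr.induction_on r (isClosed_eq hcont.norm continuous_norm) fun q => ?_
  change ‖(ue.isDenseInducing dr).extend (Rat.castHom K) (Rat.castHom ℝ q)‖ = _
  rw [IsDenseInducing.extend_eq _ hiso.continuous, eq_ratCast, eq_ratCast, h q, Real.norm_eq_abs]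

noncomputable abbrev RingHom.toNormedAlgebra {𝕜 A : Type*} [NormedField 𝕜] [SeminormedCommRing A]
    (ι : 𝕜 →+* A) (hι : ∀ r, ‖ι r‖ = ‖r‖) : NormedAlgebra 𝕜 A where
  __ := ι.toAlgebra
  norm_smul_le r x := by
    rw [Algebra.smul_def, ← hι r]
    exact norm_mul_le _ _

theorem AlgEquiv.continuous_and_continuous_symm {𝕜 E F : Type*} [NontriviallyNormedField 𝕜]
    [CompleteSpace 𝕜] [NormedRing E] [NormedAlgebra 𝕜 E] [NormedRing F] [NormedAlgebra 𝕜 F]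
    [FiniteDimensional 𝕜 F] (e : E ≃ₐ[𝕜] F) : Continuous e ∧ Continuous e.symm := by
  have : FiniteDimensional 𝕜 E := e.symm.toLinearEquiv.finiteDimensional
  let e' := e.toLinearEquiv.toContinuousLinearEquiv
  exact ⟨e'.continuous, e'.symm.continuous⟩

/-- Second theorem of Ostrowski: a field complete with respect to an archimedean
(non-ultrametric) absolute value is isomorphic, as a topological field, to `ℝ` or `ℂ`:
there is a ring isomorphism onto `ℝ` or onto `ℂ` which is a homeomorphism for the
topology induced by the absolute value and the usual topology. -/
theorem ostrowski_complete_archimedean {K : Type*} [Field K] (f : AbsoluteValue K ℝ)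
    (harch : ¬ ∀ x y : K, f (x + y) ≤ max (f x) (f y))
    (hcomplete : AbsComplete f) :
    (∃ e : K ≃+* ℝ,
        @Continuous K ℝ (absTopology f) _ e ∧ @Continuous ℝ K _ (absTopology f) e.symm) ∨
    (∃ e : K ≃+* ℂ,
        @Continuous K ℂ (absTopology f) _ e ∧ @Continuous ℂ K _ (absTopology f) e.symm) := by
  have hunbdd : ¬ ∀ n : ℕ, f n ≤ 1 := fun h =>
    harch (f.isNonarchimedean_of_forall_natCast_le_one h)
  have := f.charZero_of_not_forall_natCast_le_one hunbdd
  obtain ⟨c, hc, hrat⟩ := f.exists_rpow_ratCast_eq_abs hunbdd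
  let := (f.rpow hc fun n => by simpa using (hrat n).le).toNormedField
  have hnorm : ∀ x : K, f x ^ c = ‖x‖ := fun _ => rfl
  have := hcomplete.completeSpace_s14 hc hnorm
  obtain ⟨ι, hι⟩ := exists_ringHom_real_norm_eq (K := K) hrat
  let := ι.toNormedAlgebra hι
  rw [absTopology_eq_of_rpow_eq_norm hc hnorm]
  rcases NormedAlgebra.Real.nonempty_algEquiv_or K with ⟨⟨e⟩⟩ | ⟨⟨e⟩⟩
  · exact .inl ⟨e.toRingEquiv, e.continuous_and_continuous_symm⟩
  · exact .inr ⟨e.toRingEquiv, e.continuous_and_continuous_symm⟩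
end
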